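/- Assume the event T_α holds for some 0 ≤ α < 1 and λ0 > 0. Let S ⊆ {1,…,p} be partitioned as S = S1 ∪ S2 with S1 ∩ S2 = ∅, let s1 := |S1|, and if S1 ≠ ∅ assume φ(6,S1) > 0 (when S1 = ∅ the term 56λ²s1/φ²(6,S1) below is interpreted as 0). Then ‖f̂ − f⁰‖_n² + λ‖β̂ − b^S‖₁ ≤ 56λ²s1/φ²(6,S1) + (28/3)·λ·‖(b^S)_{S2}‖₁ + (7/6)·(λ0/λ^{α})^{2/(1−α)} + 7‖ff_S − f⁰‖_n². -/
import Mathlib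


open Finset

noncomputable section

/-- Squared normalized norm: `‖v‖ₙ² = ‖v‖₂²/n`. -/
def nsq (n : ℕ) (v : Fin n → ℝ) : ℝ := (∑ i, v i ^ 2) / n

/-- Normalized norm `‖v‖ₙ`. -/
def nnorm (n : ℕ) (v : Fin n → ℝ) : ℝ := Real.sqrt (nsq n v)

/-- `ℓ₁`-norm of a coefficient vector. -/
def l1 {p : ℕ} (β : Fin p → ℝ) : ℝ := ∑ j, |β j|

/-- `f_β := ∑ⱼ βⱼ ψⱼ`. -/
def fvec {n p : ℕ} (ψ : Fin p → Fin n → ℝ) (β : Fin p → ℝ) : Fin n → ℝ :=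
  fun i => ∑ j, β j * ψ j i

/-- Restriction `β_S` of `β` to an index set `S`. -/
def restr {p : ℕ} (S : Finset (Fin p)) (β : Fin p → ℝ) : Fin p → ℝ :=
  fun j => if j ∈ S then β j else 0

/-- Compatibility constant `φ²(L,S)`. -/
def phiSq {n p : ℕ} (ψ : Fin p → Fin n → ℝ) (L : ℝ) (S : Finset (Fin p)) : ℝ :=
  sInf {x : ℝ | ∃ β : Fin p → ℝ, l1 (restr S β) = 1 ∧ l1 (β - restr S β) ≤ L ∧
    x = S.card * nsq n (fvec ψ (restr S β) - fvec ψ (β - restr S β))}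

/-- Covering number `N(δ, F, ‖·‖ₙ)`. -/
def covN (n : ℕ) (δ : ℝ) (F : Set (Fin n → ℝ)) : ℕ :=
  sInf {N : ℕ | ∃ g : Fin N → (Fin n → ℝ), ∀ f ∈ F, ∃ k, nnorm n (f - g k) ≤ δ}

lemma nsq_nonneg' (n : ℕ) (v : Fin n → ℝ) : 0 ≤ nsq n v :=
  div_nonneg (Finset.sum_nonneg fun _ _ => sq_nonneg _) (Nat.cast_nonneg n)

lemma l1_nonneg' {p : ℕ} (β : Fin p → ℝ) : 0 ≤ l1 β :=
  Finset.sum_nonneg fun _ _ => abs_nonneg _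

lemma fvec_sub' {n p : ℕ} (ψ : Fin p → Fin n → ℝ) (β γ : Fin p → ℝ) (i : Fin n) :
    fvec ψ (β - γ) i = fvec ψ β i - fvec ψ γ i := by
  simp only [fvec, Pi.sub_apply, sub_mul]
  rw [Finset.sum_sub_distrib]

lemma l1_split' {p : ℕ} (S : Finset (Fin p)) (β : Fin p → ℝ) :
    l1 β = l1 (restr S β) + l1 (β - restr S β) := by
  unfold l1 restr
  rw [← Finset.sum_add_distrib]
  apply Finset.sum_congr rfl
  intro j _
  by_cases h : j ∈ S <;> simp [h]

set_option maxHeartbeats 1000000 in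
theorem stmt1 {n p : ℕ} (hn : 1 ≤ n) (hp : 1 ≤ p)
    (ψ : Fin p → Fin n → ℝ) (hψ : ∀ j, ∑ i, (ψ j i) ^ 2 ≤ (n : ℝ))
    (β0 : Fin p → ℝ) (ε : Fin n → ℝ)
    (α lam0 lam : ℝ) (hα0 : 0 ≤ α) (hα1 : α < 1) (hlam0 : 0 < lam0) (hlam : 0 < lam)
    (hT : ∀ β : Fin p → ℝ,
      4 * |∑ i, ε i * fvec ψ β i| / n ≤
        lam0 * nnorm n (fvec ψ β) ^ (1 - α) * l1 β ^ α)
    (hatβ : Fin p → ℝ)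
    (hmin : ∀ β : Fin p → ℝ,
      (∑ i, (fvec ψ β0 i + ε i - fvec ψ hatβ i) ^ 2) / n + lam * l1 hatβ ≤
        (∑ i, (fvec ψ β0 i + ε i - fvec ψ β i) ^ 2) / n + lam * l1 β)
    (S S1 S2 : Finset (Fin p)) (hS : S = S1 ∪ S2) (hdisj : Disjoint S1 S2)
    (hphi : S1.Nonempty → 0 < phiSq ψ 6 S1)
    (bS : Fin p → ℝ) (hbS_supp : ∀ j, j ∉ S → bS j = 0)
    (hbS_proj : ∀ b : Fin p → ℝ, (∀ j, j ∉ S → b j = 0) →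
      nsq n (fvec ψ bS - fvec ψ β0) ≤ nsq n (fvec ψ b - fvec ψ β0))
 :
    nsq n (fvec ψ hatβ - fvec ψ β0) + lam * l1 (hatβ - bS) ≤
      56 * lam ^ 2 * S1.card / phiSq ψ 6 S1
        + (28 / 3) * lam * l1 (restr S2 bS)
        + (7 / 6) * (lam0 / lam ^ α) ^ (2 / (1 - α))
        + 7 * nsq n (fvec ψ bS - fvec ψ β0) := by
  have hn' : (0 : ℝ) < n := by exact_mod_cast hn
  have hα1' : (0 : ℝ) < 1 - α := by linarith
  set Δ : Fin p → ℝ := hatβ - bS with hΔdef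
  set u := nsq n (fvec ψ hatβ - fvec ψ β0) with hu
  set v := nsq n (fvec ψ bS - fvec ψ β0) with hv
  set D := nnorm n (fvec ψ Δ) with hD
  have hu0 : 0 ≤ u := nsq_nonneg' _ _
  have hv0 : 0 ≤ v := nsq_nonneg' _ _
  have hD0 : 0 ≤ D := Real.sqrt_nonneg _
  have hDsq : D ^ 2 = nsq n (fvec ψ Δ) := Real.sq_sqrt (nsq_nonneg' _ _)
  set m1 := l1 (restr S1 Δ) with hm1
  set m2 := l1 (Δ - restr S1 Δ) with hm2
  set w2 := l1 (restr S2 bS) with hw2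
  have hm10 : 0 ≤ m1 := l1_nonneg' _
  have hm20 : 0 ≤ m2 := l1_nonneg' _
  have hw20 : 0 ≤ w2 := l1_nonneg' _
  have hΔsplit : l1 Δ = m1 + m2 := l1_split' S1 Δ
  -- D² ≤ 2u + 2v
  have hDle : D ^ 2 ≤ 2 * u + 2 * v := by
    have key : ∑ i, fvec ψ Δ i ^ 2 ≤
        ∑ i, (2 * (fvec ψ hatβ - fvec ψ β0) i ^ 2 + 2 * (fvec ψ bS - fvec ψ β0) i ^ 2) := by
      apply Finset.sum_le_sum
      intro i _
      rw [hΔdef, fvec_sub']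
      simp only [Pi.sub_apply]
      nlinarith [sq_nonneg (fvec ψ hatβ i - fvec ψ β0 i + (fvec ψ bS i - fvec ψ β0 i)),
        sq_nonneg (fvec ψ hatβ i - fvec ψ β0 i - (fvec ψ bS i - fvec ψ β0 i))]
    have h2 : 2 * u + 2 * v =
        (∑ i, (2 * (fvec ψ hatβ - fvec ψ β0) i ^ 2 + 2 * (fvec ψ bS - fvec ψ β0) i ^ 2)) / n := by
      rw [hu, hv]
      unfold nsq
      rw [Finset.sum_add_distrib, ← Finset.mul_sum, ← Finset.mul_sum]
      ring
    rw [hDsq, h2]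
    unfold nsq
    exact div_le_div_of_nonneg_right key (by positivity)
  -- basic inequality
  have hbasic : u + lam * l1 hatβ ≤ v + 2 * (∑ i, ε i * fvec ψ Δ i) / n + lam * l1 bS := by
    have hexp : ∀ g : Fin p → ℝ, ∑ i, (fvec ψ β0 i + ε i - fvec ψ g i) ^ 2
        = (∑ i, (fvec ψ g - fvec ψ β0) i ^ 2)
          - 2 * (∑ i, ε i * ((fvec ψ g - fvec ψ β0) i)) + ∑ i, ε i ^ 2 := by
      intro g
      have h1 : ∀ i : Fin n, (fvec ψ β0 i + ε i - fvec ψ g i) ^ 2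
          = (fvec ψ g - fvec ψ β0) i ^ 2 - 2 * (ε i * ((fvec ψ g - fvec ψ β0) i)) + ε i ^ 2 := by
        intro i; simp only [Pi.sub_apply]; ring
      rw [Finset.sum_congr rfl (fun i _ => h1 i), Finset.sum_add_distrib,
        Finset.sum_sub_distrib, ← Finset.mul_sum]
    have h := hmin bS
    rw [hexp hatβ, hexp bS] at h
    have hE : ∑ i, ε i * ((fvec ψ hatβ - fvec ψ β0) i) - ∑ i, ε i * ((fvec ψ bS - fvec ψ β0) i)
        = ∑ i, ε i * fvec ψ Δ i := by
      rw [← Finset.sum_sub_distrib]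
      apply Finset.sum_congr rfl
      intro i _
      rw [hΔdef, fvec_sub']
      simp only [Pi.sub_apply]
      ring
    rw [hu, hv]
    unfold nsq
    rw [← hE]
    simp only [add_div, sub_div, mul_sub] at h ⊢
    linarith [h]
  -- the rpow constant
  set q : ℝ := lam0 / lam ^ α with hq
  have hlamα : (0 : ℝ) < lam ^ α := Real.rpow_pos_of_pos hlam α
  have hqpos : 0 < q := div_pos hlam0 hlamα
  set ρ : ℝ := q ^ ((1 : ℝ) / (1 - α)) with hρ
  have hρ0 : 0 ≤ ρ := (Real.rpow_pos_of_pos hqpos _).le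
  have hρpow : ρ ^ (1 - α) = q := by
    rw [hρ, ← Real.rpow_mul hqpos.le, one_div, inv_mul_cancel₀ (ne_of_gt hα1'), Real.rpow_one]
  have hρ2 : ρ ^ 2 = q ^ ((2 : ℝ) / (1 - α)) := by
    rw [hρ, ← Real.rpow_natCast (q ^ ((1 : ℝ) / (1 - α))) 2, ← Real.rpow_mul hqpos.le]
    congr 1
    push_cast
    ring
  have hkey : (ρ / 2) ^ (1 - α) * ((lam / 2) : ℝ) ^ α = lam0 / 2 := by
    rw [Real.div_rpow hρ0 (by norm_num), Real.div_rpow hlam.le (by norm_num), hρpow,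
      div_mul_div_comm]
    congr 1
    · rw [hq, div_mul_cancel₀ _ (ne_of_gt hlamα)]
    · rw [← Real.rpow_add (by norm_num : (0:ℝ) < 2)]
      norm_num
  -- T bound
  have hEbound : 2 * (∑ i, ε i * fvec ψ Δ i) / n ≤ ρ / 2 * D + lam / 2 * l1 Δ := by
    have h := hT Δ
    have h2 : 2 * (∑ i, ε i * fvec ψ Δ i) / n ≤ 2 * |∑ i, ε i * fvec ψ Δ i| / n :=
      div_le_div_of_nonneg_right
        (by linarith [le_abs_self (∑ i, ε i * fvec ψ Δ i)]) (by positivity)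
    have hTb : lam0 / 2 * (D ^ (1 - α) * l1 Δ ^ α) ≤ ρ / 2 * D + lam / 2 * l1 Δ := by
      have hg : (ρ / 2 * D) ^ (1 - α) * (lam / 2 * l1 Δ) ^ α
          ≤ (1 - α) * (ρ / 2 * D) + α * (lam / 2 * l1 Δ) :=
        Real.geom_mean_le_arith_mean2_weighted (by linarith) hα0
          (mul_nonneg (by positivity) hD0) (mul_nonneg (by positivity) (l1_nonneg' Δ))
          (by ring)
      have heq : (ρ / 2 * D) ^ (1 - α) * (lam / 2 * l1 Δ) ^ α
          = lam0 / 2 * (D ^ (1 - α) * l1 Δ ^ α) := by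
        rw [Real.mul_rpow (by positivity) hD0, Real.mul_rpow (by positivity) (l1_nonneg' Δ)]
        linear_combination (D ^ (1 - α) * l1 Δ ^ α) * hkey
      rw [← heq]
      calc (ρ / 2 * D) ^ (1 - α) * (lam / 2 * l1 Δ) ^ α
          ≤ (1 - α) * (ρ / 2 * D) + α * (lam / 2 * l1 Δ) := hg
        _ ≤ ρ / 2 * D + lam / 2 * l1 Δ := by
            have t1 : 0 ≤ α * (ρ / 2 * D) :=
              mul_nonneg hα0 (mul_nonneg (by positivity) hD0)
            have t2 : 0 ≤ (1 - α) * (lam / 2 * l1 Δ) :=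
              mul_nonneg (by linarith) (mul_nonneg (by positivity) (l1_nonneg' Δ))
            nlinarith [t1, t2]
    calc 2 * (∑ i, ε i * fvec ψ Δ i) / n ≤ 2 * |∑ i, ε i * fvec ψ Δ i| / n := h2
      _ ≤ lam0 / 2 * (D ^ (1 - α) * l1 Δ ^ α) := by
          have : 2 * |∑ i, ε i * fvec ψ Δ i| / n = 1 / 2 * (4 * |∑ i, ε i * fvec ψ Δ i| / n) := by
            ring
          rw [this]
          calc 1 / 2 * (4 * |∑ i, ε i * fvec ψ Δ i| / n)
              ≤ 1 / 2 * (lam0 * D ^ (1 - α) * l1 Δ ^ α) := by linarith [h]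
            _ = lam0 / 2 * (D ^ (1 - α) * l1 Δ ^ α) := by ring
      _ ≤ ρ / 2 * D + lam / 2 * l1 Δ := hTb
  -- pointwise descriptions of the ℓ¹ pieces
  have ha1 : l1 (restr S1 bS) = ∑ j, (if j ∈ S1 then |bS j| else 0) := by
    unfold l1 restr
    exact Finset.sum_congr rfl fun j _ => by by_cases h : j ∈ S1 <;> simp [h]
  have ha2 : m1 = ∑ j, (if j ∈ S1 then |Δ j| else 0) := by
    rw [hm1]; unfold l1 restr
    exact Finset.sum_congr rfl fun j _ => by by_cases h : j ∈ S1 <;> simp [h]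
  have ha3 : m2 = ∑ j, (if j ∈ S1 then 0 else |Δ j|) := by
    rw [hm2]; unfold l1 restr
    exact Finset.sum_congr rfl fun j _ => by
      by_cases h : j ∈ S1 <;> simp [h, Pi.sub_apply]
  have ha4 : w2 = ∑ j, (if j ∈ S1 then 0 else |bS j|) := by
    rw [hw2]; unfold l1 restr
    refine Finset.sum_congr rfl fun j _ => ?_
    by_cases h1 : j ∈ S1
    · have h2 : j ∉ S2 := Finset.disjoint_left.mp hdisj h1
      simp [h1, h2]
    · by_cases h2 : j ∈ S2
      · simp [h1, h2]
      · have hnotS : j ∉ S := by rw [hS]; simp [h1, h2]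
        simp [h1, h2, hbS_supp j hnotS]
  have hbSsplit : l1 bS = l1 (restr S1 bS) + w2 := by
    have : l1 bS = ∑ j, ((if j ∈ S1 then |bS j| else 0) + (if j ∈ S1 then 0 else |bS j|)) := by
      unfold l1
      exact Finset.sum_congr rfl fun j _ => by by_cases h : j ∈ S1 <;> simp [h]
    rw [this, Finset.sum_add_distrib, ← ha1, ← ha4]
  have hl1hat : l1 (restr S1 bS) - m1 + m2 - w2 ≤ l1 hatβ := by
    have e1 : l1 (restr S1 bS) - m1 + m2 - w2
        = ∑ j, ((if j ∈ S1 then |bS j| else 0) - (if j ∈ S1 then |Δ j| else 0)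
            + (if j ∈ S1 then 0 else |Δ j|) - (if j ∈ S1 then 0 else |bS j|)) := by
      rw [ha1, ha2, ha3, ha4, ← Finset.sum_sub_distrib, ← Finset.sum_add_distrib,
        ← Finset.sum_sub_distrib]
    have e2 : l1 hatβ = ∑ j, |bS j + Δ j| := by
      unfold l1
      exact Finset.sum_congr rfl fun j _ => by
        rw [hΔdef]; simp only [Pi.sub_apply]; ring_nf
    rw [e1, e2]
    apply Finset.sum_le_sum
    intro j _
    by_cases h : j ∈ S1
    · simp only [h, if_true]
      have h1 := abs_add_le (bS j + Δ j) (-(Δ j))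
      simp only [add_neg_cancel_right, abs_neg] at h1
      linarith
    · simp only [h, if_false]
      have h1 := abs_add_le (bS j + Δ j) (-(bS j))
      have h2 : bS j + Δ j + -(bS j) = Δ j := by ring
      rw [h2, abs_neg] at h1
      linarith
  -- combine: the starred inequality
  have hstar : u + lam / 2 * m2 ≤ v + ρ / 2 * D + 3 * lam / 2 * m1 + 2 * lam * w2 := by
    have hdiff : l1 bS - l1 hatβ ≤ m1 - m2 + 2 * w2 := by linarith [hl1hat, hbSsplit]
    have h5 := mul_le_mul_of_nonneg_left hdiff hlam.le
    have h6 : lam / 2 * l1 Δ = lam / 2 * m1 + lam / 2 * m2 := by rw [hΔsplit]; ring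
    nlinarith [hbasic, hEbound, h5, h6]
  -- peel with a = 1/4
  have hpeel1 : ρ / 2 * D ≤ 1 / 4 * D ^ 2 + 1 / 4 * ρ ^ 2 := by linarith [sq_nonneg (D - ρ)]
  have hstar1 : 1 / 2 * u + lam / 2 * m2
      ≤ 3 / 2 * v + 1 / 4 * ρ ^ 2 + 3 * lam / 2 * m1 + 2 * lam * w2 := by
    linarith [hstar, hpeel1, hDle]
  have hterm0 : 0 ≤ 56 * lam ^ 2 * (S1.card : ℝ) / phiSq ψ 6 S1 := by
    rcases Finset.eq_empty_or_nonempty S1 with h | h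
    · simp [h]
    · exact div_nonneg (by positivity) (hphi h).le
  have hρsq0 : 0 ≤ ρ ^ 2 := sq_nonneg ρ
  have hlw2 : 0 ≤ lam * w2 := mul_nonneg hlam.le hw20
  by_cases hcase : 3 * lam / 2 * m1 ≤ 3 / 2 * v + 1 / 4 * ρ ^ 2 + 2 * lam * w2
  · -- Case 1
    have c1 : 1 / 2 * u + lam / 2 * m2
        ≤ 2 * (3 / 2 * v + 1 / 4 * ρ ^ 2 + 2 * lam * w2) := by linarith
    have c2 : lam * m1 ≤ 2 / 3 * (3 / 2 * v + 1 / 4 * ρ ^ 2 + 2 * lam * w2) := by linarith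
    have hlΔ : lam * l1 Δ = lam * m1 + lam * m2 := by rw [hΔsplit]; ring
    rw [← hρ2]
    linarith [c1, c2, hlΔ, hterm0, hu0]
  · -- Case 2
    push_neg at hcase
    have hm1pos : 0 < m1 := by
      rcases hm10.lt_or_eq with h | h
      · exact h
      · exfalso
        have h0 : 3 * lam / 2 * m1 = 0 := by rw [← h, mul_zero]
        linarith [hv0, hρsq0, hlw2]
    have hS1ne : S1.Nonempty := by
      rw [Finset.nonempty_iff_ne_empty]
      intro h
      have : m1 = 0 := by
        rw [ha2]
        apply Finset.sum_eq_zero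
        intro j _
        simp [h]
      linarith
    have hφ := hphi hS1ne
    have hcone : m2 ≤ 6 * m1 := by
      have h6 : lam * m2 ≤ lam * (6 * m1) := by linarith [hstar1, hu0]
      exact le_of_mul_le_mul_left h6 hlam
    -- compatibility constant bound
    set β' : Fin p → ℝ := fun j => if j ∈ S1 then Δ j / m1 else -(Δ j) / m1 with hβ'
    have hl1r : l1 (restr S1 β') = 1 := by
      unfold l1 restr
      have hterm : ∀ j : Fin p, |if j ∈ S1 then β' j else 0|
          = (if j ∈ S1 then |Δ j| else 0) / m1 := by
        intro j
        by_cases h : j ∈ S1 <;>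
          simp [h, hβ', abs_div, abs_of_pos hm1pos]
      rw [Finset.sum_congr rfl fun j _ => hterm j, ← Finset.sum_div, ← ha2,
        div_self hm1pos.ne']
    have hl1c : l1 (β' - restr S1 β') ≤ 6 := by
      unfold l1 restr
      have hterm : ∀ j : Fin p, |(β' - fun j => if j ∈ S1 then β' j else 0) j|
          = (if j ∈ S1 then 0 else |Δ j|) / m1 := by
        intro j
        by_cases h : j ∈ S1 <;>
          simp [h, hβ', abs_div, abs_of_pos hm1pos, neg_div]
      rw [Finset.sum_congr rfl fun j _ => hterm j, ← Finset.sum_div, ← ha3]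
      rw [div_le_iff₀ hm1pos]
      linarith
    have harg : restr S1 β' - (β' - restr S1 β') = fun j => Δ j / m1 := by
      funext j
      simp only [Pi.sub_apply, restr]
      by_cases h : j ∈ S1 <;> simp [h, hβ', neg_div] <;> ring
    have hfe : fvec ψ (restr S1 β') - fvec ψ (β' - restr S1 β') = fun i => fvec ψ Δ i / m1 := by
      funext i
      rw [Pi.sub_apply, ← fvec_sub', harg]
      show ∑ j, Δ j / m1 * ψ j i = fvec ψ Δ i / m1
      unfold fvec
      rw [Finset.sum_div]
      exact Finset.sum_congr rfl fun j _ => by ring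
    have hx : (S1.card : ℝ) * nsq n (fvec ψ (restr S1 β') - fvec ψ (β' - restr S1 β'))
        = (S1.card : ℝ) * (D ^ 2 / m1 ^ 2) := by
      rw [hfe, hDsq]
      congr 1
      unfold nsq
      simp only [div_pow]
      rw [← Finset.sum_div]
      ring
    have hle : phiSq ψ 6 S1 ≤ (S1.card : ℝ) * (D ^ 2 / m1 ^ 2) := by
      unfold phiSq
      apply csInf_le
      · refine ⟨0, fun x hx => ?_⟩
        obtain ⟨β, _, _, rfl⟩ := hx
        exact mul_nonneg (Nat.cast_nonneg _) (nsq_nonneg' _ _)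
      · exact ⟨β', hl1r, hl1c, hx.symm⟩
    have hcompat : phiSq ψ 6 S1 * m1 ^ 2 ≤ (S1.card : ℝ) * D ^ 2 := by
      have h7 := mul_le_mul_of_nonneg_right hle (sq_nonneg m1)
      have h8 : (S1.card : ℝ) * (D ^ 2 / m1 ^ 2) * m1 ^ 2 = (S1.card : ℝ) * D ^ 2 := by
        field_simp
      linarith
    have hs1pos : (0 : ℝ) < S1.card := by
      exact_mod_cast Finset.card_pos.mpr hS1ne
    have hD2pos : 0 < D ^ 2 := by
      rcases (sq_nonneg D).lt_or_eq with h | h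
      · exact h
      · exfalso
        have h0 : (S1.card : ℝ) * D ^ 2 = 0 := by rw [← h, mul_zero]
        have h3 := mul_pos hφ (pow_pos hm1pos 2)
        linarith [hcompat]
    -- 2λm1 ≤ (1/7)D² + 7λ²s1/φ²
    have hbound : 2 * lam * m1
        ≤ 1 / 7 * D ^ 2 + 7 * (lam ^ 2 * (S1.card : ℝ) / phiSq ψ 6 S1) := by
      have h1 : m1 ^ 2 / D ^ 2 ≤ (S1.card : ℝ) / phiSq ψ 6 S1 := by
        rw [div_le_div_iff₀ hD2pos hφ]
        linarith [hcompat]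
      have h2 : 2 * lam * m1 ≤ 1 / 7 * D ^ 2 + 7 * lam ^ 2 * (m1 ^ 2 / D ^ 2) := by
        have hform : 1 / 7 * D ^ 2 + 7 * lam ^ 2 * (m1 ^ 2 / D ^ 2)
            = (1 / 7 * D ^ 2 * D ^ 2 + 7 * lam ^ 2 * m1 ^ 2) / D ^ 2 := by
          field_simp
        rw [hform, le_div_iff₀ hD2pos]
        linarith [sq_nonneg (D ^ 2 - 7 * (lam * m1))]
      have h3 := mul_le_mul_of_nonneg_left h1 (by positivity : (0:ℝ) ≤ 7 * lam ^ 2)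
      have h4 : 7 * lam ^ 2 * ((S1.card : ℝ) / phiSq ψ 6 S1)
          = 7 * (lam ^ 2 * (S1.card : ℝ) / phiSq ψ 6 S1) := by ring
      linarith
    have hpeel2 : ρ / 2 * D ≤ 3 / 28 * D ^ 2 + 7 / 12 * ρ ^ 2 := by
      linarith [sq_nonneg (3 * D - 7 * ρ)]
    have hlΔ : lam * l1 Δ = lam * m1 + lam * m2 := by rw [hΔsplit]; ring
    have hP0 : 0 ≤ lam ^ 2 * (S1.card : ℝ) / phiSq ψ 6 S1 :=
      div_nonneg (by positivity) hφ.le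
    have egoal : 56 * lam ^ 2 * (S1.card : ℝ) / phiSq ψ 6 S1
        = 56 * (lam ^ 2 * (S1.card : ℝ) / phiSq ψ 6 S1) := by ring
    have A1 : ρ / 2 * D * 2 ≤ 3 / 14 * D ^ 2 + 7 / 6 * ρ ^ 2 := by linarith [hpeel2]
    have A2 : 4 * (lam * m1)
        ≤ 2 / 7 * D ^ 2 + 14 * (lam ^ 2 * (S1.card : ℝ) / phiSq ψ 6 S1) := by
      linarith [hbound]
    have A3 : u + lam * m1 + lam * m2
        ≤ 3 * v + 7 / 6 * ρ ^ 2 + 14 * (lam ^ 2 * (S1.card : ℝ) / phiSq ψ 6 S1)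
          + 4 * (lam * w2) := by
      linarith [hstar, A1, A2, hDle]
    rw [← hρ2, egoal]
    linarith [A3, hv0, hlw2, hlΔ, hP0]
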